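/- arXiv:2106.00575 — 2 statements merged into one kernel-verified Lean document; each statement's English description precedes it below -/
import Mathlib

section
/- Fix an integer d ≥ 1 and real numbers ν > 0 and k > 0. Let ω_d be the Lebesgue measure of the unit ball of ℝ^d, let R_0 = (d/(ν ω_d))^{1/d}, and for ℓ > e^e let R_ℓ = R_0 (log ℓ)^{1/d} − (log log ℓ)². Then there exists L > e^e such that for all ℓ ≥ L, ⌊ℓ/(R_ℓ + k)⌋^d · exp(−ν ω_d (R_ℓ + k)^d) ≥ exp((log log ℓ)² / (2 R_0)). -/
set_option maxHeartbeats 1000000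


open MeasureTheory Real

/-- Key quantitative estimate in the proof of the almost-sure clearings lemma:
for `d ≥ 1`, `ν > 0`, `k > 0`, with `ω_d` the volume of the unit ball of `ℝ^d`,
`R₀ = (d/(ν ω_d))^{1/d}` and `R ℓ = R₀ (log ℓ)^{1/d} − (log log ℓ)²`, there is
`L > e^e` such that for all `ℓ ≥ L`,
`⌊ℓ/(R ℓ + k)⌋^d · exp(−ν ω_d (R ℓ + k)^d) ≥ exp((log log ℓ)²/(2 R₀))`. -/
theorem stmt0 (d : ℕ) (hd : 1 ≤ d) (ν k : ℝ) (hν : 0 < ν) (hk : 0 < k)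
    (ωd : ℝ)
    (hωd : ωd = (volume (Metric.ball (0 : EuclideanSpace ℝ (Fin d)) 1)).toReal)
    (R₀ : ℝ) (hR₀ : R₀ = ((d : ℝ) / (ν * ωd)) ^ ((1 : ℝ) / d))
    (R : ℝ → ℝ)
    (hR : ∀ ℓ > Real.exp (Real.exp 1),
      R ℓ = R₀ * (Real.log ℓ) ^ ((1 : ℝ) / d) - (Real.log (Real.log ℓ)) ^ 2) :
    ∃ L, Real.exp (Real.exp 1) < L ∧ ∀ ℓ ≥ L,
      (⌊ℓ / (R ℓ + k)⌋ : ℝ) ^ d * Real.exp (-(ν * ωd * (R ℓ + k) ^ d))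
        ≥ Real.exp ((Real.log (Real.log ℓ)) ^ 2 / (2 * R₀)) := by
  obtain ⟨e, rfl⟩ : ∃ e, d = e + 1 := ⟨d - 1, (Nat.succ_pred_eq_of_pos hd).symm⟩
  set d : ℕ := e + 1 with hdev
  have hd0 : (0 : ℝ) < d := by positivity
  have hωpos : 0 < ωd := by
    rw [hωd]
    exact ENNReal.toReal_pos (Metric.measure_ball_pos _ _ one_pos).ne'
      measure_ball_lt_top.ne
  have hνω : 0 < ν * ωd := mul_pos hν hωpos
  have hfrac : 0 < (d : ℝ) / (ν * ωd) := div_pos hd0 hνω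
  have hR₀pos : 0 < R₀ := hR₀ ▸ rpow_pos_of_pos hfrac _
  have hRd : ν * ωd * R₀ ^ d = (d : ℝ) := by
    rw [hR₀, ← Real.rpow_natCast (((d : ℝ) / (ν * ωd)) ^ ((1 : ℝ) / d)) d,
      ← Real.rpow_mul hfrac.le, one_div, inv_mul_cancel₀ hd0.ne', Real.rpow_one]
    field_simp
  -- eventual conditions
  have hA : ∀ᶠ ℓ in Filter.atTop,
      (Real.log (Real.log ℓ)) ^ 2 ≤ R₀ * (Real.log ℓ) ^ ((1 : ℝ) / d) := by
    have o1 : (fun x : ℝ => Real.log x ^ (2 : ℝ)) =o[Filter.atTop]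
        fun x => x ^ ((1 : ℝ) / d) :=
      isLittleO_log_rpow_rpow_atTop 2 (by positivity)
    have o2 := (o1.comp_tendsto Real.tendsto_log_atTop).def hR₀pos
    have h0 : ∀ᶠ ℓ : ℝ in Filter.atTop, 0 ≤ Real.log (Real.log ℓ) :=
      (Real.tendsto_log_atTop.comp Real.tendsto_log_atTop).eventually_ge_atTop 0
    have h1 : ∀ᶠ ℓ : ℝ in Filter.atTop, 0 ≤ Real.log ℓ :=
      Real.tendsto_log_atTop.eventually_ge_atTop 0
    filter_upwards [o2, h0, h1] with ℓ h2 h3 h4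
    simp only [Function.comp] at h2
    rw [Real.norm_eq_abs, Real.norm_eq_abs, abs_of_nonneg (Real.rpow_nonneg h3 _),
      abs_of_nonneg (Real.rpow_nonneg h4 _), Real.rpow_two] at h2
    exact h2
  have hB : ∀ᶠ ℓ : ℝ in Filter.atTop, 2 * (R₀ + k) * Real.log ℓ ≤ ℓ := by
    have hc : (0 : ℝ) < (2 * (R₀ + k))⁻¹ := by positivity
    have o3 := Real.isLittleO_log_id_atTop.def hc
    have h1 : ∀ᶠ ℓ : ℝ in Filter.atTop, 0 ≤ Real.log ℓ :=
      Real.tendsto_log_atTop.eventually_ge_atTop 0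
    filter_upwards [o3, h1, Filter.eventually_ge_atTop (0 : ℝ)] with ℓ h2 h3 h4
    rw [Real.norm_eq_abs, Real.norm_eq_abs, id, abs_of_nonneg h3, abs_of_nonneg h4] at h2
    rw [← le_div_iff₀' (by positivity)]
    rwa [inv_mul_eq_div] at h2
  have hC : ∀ᶠ ℓ : ℝ in Filter.atTop,
      2 * R₀ * d * Real.log (Real.log ℓ)
        + (2 * k + 2 * R₀ * d * (Real.log (R₀ + k) + Real.log 2))
        ≤ (Real.log (Real.log ℓ)) ^ 2 ∧ k ≤ (Real.log (Real.log ℓ)) ^ 2 := by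
    have := (Real.tendsto_log_atTop.comp Real.tendsto_log_atTop).eventually_ge_atTop
      (max (max (2 * R₀ * d + 1) (2 * k + 2 * R₀ * d * (Real.log (R₀ + k) + Real.log 2)))
        (max k 1))
    filter_upwards [this] with ℓ ht
    simp only [Function.comp, le_max_iff, max_le_iff] at ht
    obtain ⟨⟨ht1, ht2⟩, ht3, ht4⟩ := ht
    set t := Real.log (Real.log ℓ)
    constructor
    · nlinarith [mul_le_mul_of_nonneg_right (show 2 * R₀ * (d : ℝ) ≤ t - 1 by linarith)
        (show (0 : ℝ) ≤ t by linarith)]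
    · nlinarith
  obtain ⟨M, hM⟩ := Filter.eventually_atTop.mp ((hA.and hB).and hC)
  refine ⟨max M (Real.exp (Real.exp 1) + 1),
    lt_of_lt_of_le (lt_add_one _) (le_max_right _ _), ?_⟩
  intro ℓ hℓ
  have hℓe : Real.exp (Real.exp 1) < ℓ :=
    lt_of_lt_of_le (lt_of_lt_of_le (lt_add_one _) (le_max_right _ _)) hℓ
  obtain ⟨⟨c2, c3⟩, c5, ck⟩ := hM ℓ (le_trans (le_max_left _ _) hℓ)
  have hℓpos : 0 < ℓ := lt_trans (Real.exp_pos _) hℓe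
  have hLge : Real.exp 1 < Real.log ℓ := by
    have := Real.log_lt_log (Real.exp_pos _) hℓe
    rwa [Real.log_exp] at this
  have hLg1 : 1 ≤ Real.log ℓ := by
    have := Real.add_one_le_exp (1 : ℝ); linarith
  have hLL1 : 1 ≤ Real.log (Real.log ℓ) := by
    have := Real.log_lt_log (Real.exp_pos 1) hLge
    rw [Real.log_exp] at this; linarith
  have hRl := hR ℓ hℓe
  set T := Real.log (Real.log ℓ) with hT
  set Lg := Real.log ℓ with hLg
  -- basic powers of log
  have hLgpow1 : 1 ≤ Lg ^ ((1 : ℝ) / d) := Real.one_le_rpow hLg1 (by positivity)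
  have hLgpow : Lg ^ ((1 : ℝ) / d) ≤ Lg := by
    calc Lg ^ ((1 : ℝ) / d) ≤ Lg ^ (1 : ℝ) :=
          Real.rpow_le_rpow_of_exponent_le hLg1 (by
            rw [div_le_one hd0]
            exact_mod_cast hd)
      _ = Lg := Real.rpow_one _
  have hpowd : (Lg ^ ((1 : ℝ) / d)) ^ d = Lg := by
    rw [← Real.rpow_natCast (Lg ^ ((1 : ℝ) / d)) d, ← Real.rpow_mul (by linarith),
      one_div, inv_mul_cancel₀ hd0.ne', Real.rpow_one]
  have hRk_pos : 0 < R ℓ + k := by rw [hRl]; nlinarith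
  have hRk_le : R ℓ + k ≤ (R₀ + k) * Lg := by
    rw [hRl]
    nlinarith [mul_le_mul_of_nonneg_left hLgpow hR₀pos.le, sq_nonneg T,
      mul_nonneg hk.le (sub_nonneg.2 hLg1)]
  have hx2 : 2 ≤ ℓ / (R ℓ + k) := by
    rw [le_div_iff₀ hRk_pos]
    linarith
  have hfl : ℓ / (R ℓ + k) / 2 ≤ (⌊ℓ / (R ℓ + k)⌋ : ℝ) := by
    have := Int.sub_one_lt_floor (ℓ / (R ℓ + k))
    linarith
  have hx2pos : 0 < ℓ / (R ℓ + k) / 2 := by linarith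
  -- key exponential bound
  have hab : R ℓ + k ≤ R₀ * Lg ^ ((1 : ℝ) / d) := by rw [hRl]; linarith
  have hge1 : 1 ≤ R₀ * (ν * ωd * (R₀ * Lg ^ ((1 : ℝ) / d)) ^ e) := by
    have hPe : 1 ≤ (Lg ^ ((1 : ℝ) / d)) ^ e := by
      calc (1 : ℝ) = 1 ^ e := (one_pow e).symm
        _ ≤ (Lg ^ ((1 : ℝ) / d)) ^ e := pow_le_pow_left₀ zero_le_one hLgpow1 e
    have h1 : (1 : ℝ) ≤ ν * ωd * R₀ ^ d := by
      rw [hRd]; exact_mod_cast hd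
    have h2 : ν * ωd * R₀ ^ d = R₀ * (ν * ωd * R₀ ^ e) := by
      rw [hdev, pow_succ]; ring
    have h3 : R₀ * (ν * ωd * R₀ ^ e) ≤ R₀ * (ν * ωd * (R₀ * Lg ^ ((1 : ℝ) / d)) ^ e) := by
      rw [mul_pow]
      have := mul_le_mul_of_nonneg_left hPe
        (show (0 : ℝ) ≤ R₀ * (ν * ωd * R₀ ^ e) by positivity)
      linarith [this]
    linarith [h1, h2, h3]
  have hbd : R₀ * (ν * ωd * (R ℓ + k) ^ d) ≤ R₀ * ((d : ℝ) * Lg) - (T ^ 2 - k) := by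
    have h1 : (R ℓ + k) ^ d ≤ (R₀ * Lg ^ ((1 : ℝ) / d)) ^ e * (R ℓ + k) := by
      rw [hdev, pow_succ]
      exact mul_le_mul_of_nonneg_right (pow_le_pow_left₀ hRk_pos.le hab e) hRk_pos.le
    have h2 : ν * ωd * ((R₀ * Lg ^ ((1 : ℝ) / d)) ^ e * (R ℓ + k))
        = ν * ωd * (R₀ * Lg ^ ((1 : ℝ) / d)) ^ d
          - ν * ωd * (R₀ * Lg ^ ((1 : ℝ) / d)) ^ e * (T ^ 2 - k) := by
      rw [hRl, hdev, pow_succ]; ring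
    have h3 : ν * ωd * (R₀ * Lg ^ ((1 : ℝ) / d)) ^ d = (d : ℝ) * Lg := by
      rw [mul_pow, hpowd, ← mul_assoc, hRd]
    have h4 : T ^ 2 - k ≤ R₀ * (ν * ωd * (R₀ * Lg ^ ((1 : ℝ) / d)) ^ e) * (T ^ 2 - k) := by
      nlinarith [sub_nonneg.2 ck]
    have h6 : ν * ωd * (R ℓ + k) ^ d ≤ (d : ℝ) * Lg
        - ν * ωd * (R₀ * Lg ^ ((1 : ℝ) / d)) ^ e * (T ^ 2 - k) := by
      have := mul_le_mul_of_nonneg_left h1 hνω.le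
      calc ν * ωd * (R ℓ + k) ^ d
          ≤ ν * ωd * ((R₀ * Lg ^ ((1 : ℝ) / d)) ^ e * (R ℓ + k)) := this
        _ = (d : ℝ) * Lg - ν * ωd * (R₀ * Lg ^ ((1 : ℝ) / d)) ^ e * (T ^ 2 - k) := by
            rw [h2, h3]
    have h7 := mul_le_mul_of_nonneg_left h6 hR₀pos.le
    nlinarith [h4]
  have hlogx : Real.log (ℓ / (R ℓ + k) / 2) = Lg - Real.log (R ℓ + k) - Real.log 2 := by
    rw [Real.log_div (div_pos hℓpos hRk_pos).ne' two_ne_zero,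
      Real.log_div hℓpos.ne' hRk_pos.ne']
  have hlogRk : Real.log (R ℓ + k) ≤ Real.log (R₀ + k) + T := by
    calc Real.log (R ℓ + k) ≤ Real.log ((R₀ + k) * Lg) := Real.log_le_log hRk_pos hRk_le
      _ = Real.log (R₀ + k) + T := by
          rw [Real.log_mul (by positivity) (by linarith)]
  -- exponent inequality
  have hexp : T ^ 2 / (2 * R₀) ≤ (d : ℝ) * Real.log (ℓ / (R ℓ + k) / 2)
      - ν * ωd * (R ℓ + k) ^ d := by
    rw [div_le_iff₀ (by positivity), hlogx]
    have hmul := mul_le_mul_of_nonneg_left hlogRk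
      (show (0 : ℝ) ≤ 2 * R₀ * d by positivity)
    nlinarith [hbd, c5]
  -- conclude
  calc Real.exp (T ^ 2 / (2 * R₀))
      ≤ Real.exp ((d : ℝ) * Real.log (ℓ / (R ℓ + k) / 2) - ν * ωd * (R ℓ + k) ^ d) :=
        Real.exp_le_exp.mpr hexp
    _ = (ℓ / (R ℓ + k) / 2) ^ d * Real.exp (-(ν * ωd * (R ℓ + k) ^ d)) := by
        rw [sub_eq_add_neg, Real.exp_add, Real.exp_nat_mul, Real.exp_log hx2pos]
    _ ≤ (⌊ℓ / (R ℓ + k)⌋ : ℝ) ^ d * Real.exp (-(ν * ωd * (R ℓ + k) ^ d)) :=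
        mul_le_mul_of_nonneg_right (pow_le_pow_left₀ hx2pos.le hfl d) (Real.exp_pos _).le
end

section
/- Let c > 0 and R_0 > 0 be real and d ≥ 1 an integer. For t > e^e define ℓ(t) = t^{1 − 1/(log log t)} and R(t) = R_0 (log ℓ(t))^{1/d} − (log log ℓ(t))², and for integers k ≥ 2 define f(k) = exp( (2/c)^d · (log k)^d ). Then lim_{k→∞} ( f(k+1) − f(k) ) · R(f(k))² / f(k) = 0. -/
open Filter Real

set_option maxHeartbeats 1000000

private lemma aux_pow_sub_le (n : ℕ) {a b : ℝ} (hb : 0 ≤ b) (hba : b ≤ a) (ha1 : 1 ≤ a) :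
    a ^ n - b ^ n ≤ n * a ^ n * (a - b) := by
  induction n with
  | zero => simp
  | succ n ih =>
    have ha : 0 ≤ a := hb.trans hba
    have hbn : b ^ n ≤ a ^ n := pow_le_pow_left₀ hb hba n
    have han : 0 ≤ a ^ n := pow_nonneg ha n
    have e1 : a * (a ^ n - b ^ n) ≤ a * ((n : ℝ) * a ^ n * (a - b)) :=
      mul_le_mul_of_nonneg_left ih ha
    have e2 : b ^ n * (a - b) ≤ a ^ n * (a - b) :=
      mul_le_mul_of_nonneg_right hbn (by linarith)
    have e3 : a ^ n * (a - b) ≤ a ^ (n + 1) * (a - b) := by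
      have : a ^ n ≤ a ^ (n + 1) := pow_le_pow_right₀ ha1 (Nat.le_succ n)
      exact mul_le_mul_of_nonneg_right this (by linarith)
    have e4 : a * ((n : ℝ) * a ^ n * (a - b)) = (n : ℝ) * a ^ (n + 1) * (a - b) := by ring
    have e5 : a ^ (n + 1) - b ^ (n + 1) = a * (a ^ n - b ^ n) + b ^ n * (a - b) := by ring
    push_cast
    linarith

/-- The gaps `f(k+1) − f(k)` of the Borel–Cantelli time subsequence
`f(k) = exp((2/c)^d (log k)^d)` are negligible compared with `f(k)/R(f(k))²`,
where `R(t) = R₀ (log ℓ(t))^{1/d} − (log log ℓ(t))²` is the clearing radius at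
time scale `ℓ(t) = t^{1−1/(log log t)}`. -/
theorem stmt9 (c R₀ : ℝ) (hc : 0 < c) (hR₀ : 0 < R₀) (d : ℕ) (hd : 1 ≤ d)
    (ℓ R : ℝ → ℝ)
    (hℓ : ∀ t > Real.exp (Real.exp 1),
      ℓ t = t ^ ((1 : ℝ) - 1 / Real.log (Real.log t)))
    (hR : ∀ t > Real.exp (Real.exp 1),
      R t = R₀ * (Real.log (ℓ t)) ^ ((1 : ℝ) / d)
              - (Real.log (Real.log (ℓ t))) ^ 2)
    (f : ℕ → ℝ)
    (hf : ∀ k : ℕ, 2 ≤ k →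
      f k = Real.exp ((2 / c) ^ d * (Real.log k) ^ d)) :
    Tendsto (fun k : ℕ => (f (k + 1) - f k) * (R (f k)) ^ 2 / f k)
      atTop (nhds 0) := by
  set A : ℝ := (2 / c) ^ d with hA_def
  have hA : 0 < A := pow_pos (div_pos two_pos hc) d
  have hd0 : (0:ℝ) < (d:ℝ) := by exact_mod_cast Nat.lt_of_lt_of_le Nat.zero_lt_one hd
  set C2 : ℝ := (R₀ * A + A ^ 2) ^ 2 with hC2_def
  have hC2 : 0 < C2 := by positivity
  set K : ℝ := 3 * A * d * 2 ^ d * C2 with hK_def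
  have hK : 0 < K :=
    mul_pos (mul_pos (mul_pos (mul_pos three_pos hA) hd0) (pow_pos two_pos d)) hC2
  -- basic tendsto facts
  have hlogn : Tendsto (fun k : ℕ => Real.log k) atTop atTop :=
    Real.tendsto_log_atTop.comp tendsto_natCast_atTop_atTop
  have hlf_t : Tendsto (fun k : ℕ => A * (Real.log k) ^ d) atTop atTop := by
    refine Tendsto.const_mul_atTop hA ?_
    exact (tendsto_pow_atTop (by omega : d ≠ 0)).comp hlogn
  have hu_t : Tendsto (fun k : ℕ => Real.log (A * (Real.log k) ^ d)) atTop atTop :=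
    Real.tendsto_log_atTop.comp hlf_t
  have hbase : Tendsto (fun k : ℕ => (Real.log k) ^ d / (k : ℝ)) atTop (nhds 0) := by
    have h := Real.tendsto_pow_log_div_mul_add_atTop 1 0 d one_ne_zero
    simp only [one_mul, add_zero] at h
    exact h.comp tendsto_natCast_atTop_atTop
  have hsmall : ∀ᶠ k : ℕ in atTop,
      A * d * 2 ^ d * ((Real.log k) ^ d / (k : ℝ)) < 1 := by
    have h : Tendsto (fun k : ℕ => A * d * 2 ^ d * ((Real.log k) ^ d / (k : ℝ)))
        atTop (nhds 0) := by
      simpa using hbase.const_mul (A * (d:ℝ) * 2 ^ d)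
    exact h.eventually (gt_mem_nhds one_pos)
  -- the key eventual estimate
  have key : ∀ᶠ k : ℕ in atTop,
      0 ≤ (f (k + 1) - f k) * (R (f k)) ^ 2 / f k ∧
      (f (k + 1) - f k) * (R (f k)) ^ 2 / f k
        ≤ K * (((Real.log k) ^ d) ^ 5 / (k : ℝ)) := by
    filter_upwards [eventually_ge_atTop 3, hlogn.eventually_ge_atTop 1,
      hlf_t.eventually_ge_atTop 3, hu_t.eventually_ge_atTop 2, hsmall]
      with k hk3 hx1 hlf3 hu2 hsm
    have hk0 : (0:ℝ) < (k:ℝ) := by positivity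
    set x : ℝ := Real.log k with hx_def
    set y : ℝ := x ^ d with hy_def
    have hy1 : 1 ≤ y := by
      have := pow_le_pow_left₀ (zero_le_one) hx1 d
      simpa [hy_def] using this
    set lf : ℝ := A * y with hlf_def
    have hlf0 : 0 < lf := mul_pos hA (by linarith)
    set a : ℝ := Real.log ((k:ℝ) + 1) with ha_def
    have hxa : x ≤ a := Real.log_le_log (by positivity) (by linarith)
    have ha1 : 1 ≤ a := hx1.trans hxa
    have ha2x : a ≤ 2 * x := by
      have h1 : ((k:ℝ) + 1) ≤ (k:ℝ) ^ 2 := by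
        have h : (3:ℝ) ≤ (k:ℝ) := by exact_mod_cast hk3
        nlinarith only [h, sq_nonneg ((k:ℝ) - 1)]
      have h2 := Real.log_le_log (by positivity : (0:ℝ) < (k:ℝ) + 1) h1
      rw [Real.log_pow] at h2
      rw [ha_def, hx_def]
      push_cast at h2 ⊢
      linarith
    -- f values
    have hfk : f k = Real.exp lf := by
      rw [hf k (by omega), hlf_def, hy_def, hx_def]
    have hfk1 : f (k + 1) = Real.exp (A * a ^ d) := by
      rw [hf (k + 1) (by omega), ha_def]
      norm_num
    have hfkpos : 0 < f k := hfk ▸ Real.exp_pos _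
    -- f k > e^e
    have hfe : Real.exp (Real.exp 1) < f k := by
      rw [hfk]
      refine Real.exp_lt_exp.2 ?_
      have := Real.exp_one_lt_d9
      linarith
    -- log log f k
    have hlogfk : Real.log (f k) = lf := by rw [hfk, Real.log_exp]
    set u : ℝ := Real.log lf with hu_def
    -- log ℓ (f k)
    have hℓfk : ℓ (f k) = (f k) ^ ((1:ℝ) - 1 / u) := by
      rw [hℓ (f k) hfe, hlogfk]
    have hlogℓ : Real.log (ℓ (f k)) = (1 - 1 / u) * lf := by
      rw [hℓfk, Real.log_rpow hfkpos, hlogfk]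
    have hfrac : 1 / u ≤ 1 / 2 := by
      apply one_div_le_one_div_of_le <;> linarith
    have hfrac0 : 0 < 1 / u := by positivity
    have hlogℓ_le : Real.log (ℓ (f k)) ≤ lf := by
      rw [hlogℓ]
      have h := mul_le_mul_of_nonneg_right (by linarith : (1 - 1/u) ≤ 1) hlf0.le
      linarith
    have hlogℓ_ge : 1 ≤ Real.log (ℓ (f k)) := by
      rw [hlogℓ]
      have h := mul_le_mul_of_nonneg_right (by linarith : (1:ℝ)/2 ≤ 1 - 1/u) hlf0.le
      linarith
    -- bound on R
    have hRfk : R (f k) = R₀ * (Real.log (ℓ (f k))) ^ ((1:ℝ) / d)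
        - (Real.log (Real.log (ℓ (f k)))) ^ 2 := hR (f k) hfe
    have hdiv1 : (1:ℝ) / (d:ℝ) ≤ 1 := by
      rw [div_le_one hd0]
      exact_mod_cast hd
    have hT1 : (Real.log (ℓ (f k))) ^ ((1:ℝ) / (d:ℝ)) ≤ lf := by
      have h1 : (Real.log (ℓ (f k))) ^ ((1:ℝ) / (d:ℝ)) ≤ (Real.log (ℓ (f k))) ^ (1:ℝ) :=
        Real.rpow_le_rpow_of_exponent_le hlogℓ_ge hdiv1
      rw [Real.rpow_one] at h1
      linarith
    have hT1' : 0 ≤ (Real.log (ℓ (f k))) ^ ((1:ℝ) / (d:ℝ)) :=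
      Real.rpow_nonneg (by linarith) _
    have hT2a : 0 ≤ Real.log (Real.log (ℓ (f k))) := Real.log_nonneg hlogℓ_ge
    have hT2b : Real.log (Real.log (ℓ (f k))) ≤ lf :=
      (Real.log_le_self (by linarith)).trans hlogℓ_le
    have hRabs : |R (f k)| ≤ R₀ * lf + lf ^ 2 := by
      rw [hRfk]
      have h1 := abs_sub (R₀ * (Real.log (ℓ (f k))) ^ ((1:ℝ) / (d:ℝ)))
        ((Real.log (Real.log (ℓ (f k)))) ^ 2)
      rw [abs_of_nonneg (mul_nonneg hR₀.le hT1'), abs_of_nonneg (sq_nonneg (Real.log (Real.log (ℓ (f k)))))] at h1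
      have h2 : R₀ * (Real.log (ℓ (f k))) ^ ((1:ℝ) / (d:ℝ)) ≤ R₀ * lf :=
        mul_le_mul_of_nonneg_left hT1 hR₀.le
      have h3 : (Real.log (Real.log (ℓ (f k)))) ^ 2 ≤ lf ^ 2 :=
        pow_le_pow_left₀ hT2a hT2b 2
      linarith
    have hRsq : (R (f k)) ^ 2 ≤ C2 * y ^ 4 := by
      have h1 : (R (f k)) ^ 2 ≤ (R₀ * lf + lf ^ 2) ^ 2 := by
        rw [← sq_abs]
        exact pow_le_pow_left₀ (abs_nonneg _) hRabs 2
      have h2 : R₀ * lf + lf ^ 2 ≤ (R₀ * A + A ^ 2) * y ^ 2 := by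
        have hyy : y ≤ y ^ 2 := by nlinarith only [hy1]
        have h := mul_le_mul_of_nonneg_left hyy (mul_pos hR₀ hA).le
        rw [hlf_def]
        nlinarith only [h]
      have h3 : (R₀ * lf + lf ^ 2) ^ 2 ≤ ((R₀ * A + A ^ 2) * y ^ 2) ^ 2 :=
        pow_le_pow_left₀ (by positivity) h2 2
      calc (R (f k)) ^ 2 ≤ ((R₀ * A + A ^ 2) * y ^ 2) ^ 2 := h1.trans h3
        _ = C2 * y ^ 4 := by rw [hC2_def]; ring
    have hRsq0 : 0 ≤ (R (f k)) ^ 2 := sq_nonneg _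
    -- the gap δ
    set δ : ℝ := a ^ d - x ^ d with hδ_def
    have hδ0 : 0 ≤ δ := by
      have := pow_le_pow_left₀ (by linarith : (0:ℝ) ≤ x) hxa d
      simp only [hδ_def]; linarith
    have hab : a - x ≤ 1 / k := by
      have h2 : ((k:ℝ) + 1) = (k:ℝ) * (1 + 1 / k) := by field_simp
      have h3 : a = x + Real.log (1 + 1 / (k:ℝ)) := by
        rw [ha_def, h2, Real.log_mul (by positivity) (by positivity), hx_def]
      have h4 : Real.log (1 + 1 / (k:ℝ)) ≤ 1 / k :=
        (Real.log_le_sub_one_of_pos (by positivity)).trans (by linarith)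
      linarith
    have hδle : δ ≤ d * 2 ^ d * y / k := by
      have h1 : δ ≤ d * a ^ d * (a - x) :=
        aux_pow_sub_le d (by linarith : (0:ℝ) ≤ x) hxa ha1
      have h2 : a ^ d ≤ 2 ^ d * y := by
        have := pow_le_pow_left₀ (by linarith : (0:ℝ) ≤ a) ha2x d
        rw [mul_pow] at this
        simpa [hy_def] using this
      have h3 : (d:ℝ) * a ^ d * (a - x) ≤ d * (2 ^ d * y) * (1 / k) := by
        apply mul_le_mul
        · exact mul_le_mul_of_nonneg_left h2 (by positivity)
        · exact hab
        · linarith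
        · positivity
      calc δ ≤ (d:ℝ) * (2 ^ d * y) * (1 / k) := h1.trans h3
        _ = d * 2 ^ d * y / k := by ring
    have hAδ1 : A * δ ≤ 1 := by
      calc A * δ ≤ A * ((d:ℝ) * 2 ^ d * y / k) := mul_le_mul_of_nonneg_left hδle hA.le
        _ = A * d * 2 ^ d * (y / k) := by ring
        _ ≤ 1 := hsm.le
    have hAδ0 : 0 ≤ A * δ := mul_nonneg hA.le hδ0
    -- gap formula
    have harg : A * a ^ d = lf + A * δ := by
      simp only [hδ_def, hlf_def, hy_def]
      ring
    have hdiff : f (k + 1) - f k = f k * (Real.exp (A * δ) - 1) := by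
      rw [hfk1, hfk, harg, Real.exp_add]
      ring
    have hgk : (f (k + 1) - f k) * (R (f k)) ^ 2 / f k
        = (Real.exp (A * δ) - 1) * (R (f k)) ^ 2 := by
      rw [hdiff]
      field_simp [hfkpos.ne']
    have hE0 : 0 ≤ Real.exp (A * δ) - 1 := by
      have := Real.one_le_exp hAδ0
      linarith
    have hE : Real.exp (A * δ) - 1 ≤ 3 * (A * δ) := by
      have h1 : 1 - A * δ ≤ Real.exp (-(A * δ)) := by
        have := Real.add_one_le_exp (-(A * δ)); linarith
      have h2 : Real.exp (-(A * δ)) * Real.exp (A * δ) = 1 := by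
        rw [← Real.exp_add]; simp
      have h3 : Real.exp (A * δ) ≤ Real.exp 1 := Real.exp_le_exp.2 hAδ1
      have h4 : Real.exp 1 < 3 := by
        have := Real.exp_one_lt_d9; linarith
      have h5 := mul_le_mul_of_nonneg_right h1 (Real.exp_pos (A * δ)).le
      have h6 := mul_le_mul_of_nonneg_left h3 hAδ0
      have h7 := mul_le_mul_of_nonneg_left h4.le hAδ0
      nlinarith only [h5, h2, h6, h7]
    constructor
    · rw [hgk]
      exact mul_nonneg hE0 hRsq0
    · rw [hgk]
      have h1 : (Real.exp (A * δ) - 1) * (R (f k)) ^ 2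
          ≤ (3 * (A * δ)) * (C2 * y ^ 4) :=
        mul_le_mul hE hRsq hRsq0 (by linarith)
      have h2 : (3 * (A * δ)) * (C2 * y ^ 4)
          ≤ (3 * (A * ((d:ℝ) * 2 ^ d * y / k))) * (C2 * y ^ 4) := by
        apply mul_le_mul_of_nonneg_right _ (by positivity)
        have := mul_le_mul_of_nonneg_left hδle hA.le
        linarith
      have h3 : (3 * (A * ((d:ℝ) * 2 ^ d * y / k))) * (C2 * y ^ 4)
          = K * (y ^ 5 / k) := by
        rw [hK_def]; field_simp
      calc (Real.exp (A * δ) - 1) * (R (f k)) ^ 2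
          ≤ (3 * (A * ((d:ℝ) * 2 ^ d * y / k))) * (C2 * y ^ 4) := h1.trans h2
        _ = K * (y ^ 5 / k) := h3
  -- conclude by squeezing
  have hBnd : Tendsto (fun k : ℕ => K * (((Real.log k) ^ d) ^ 5 / (k : ℝ)))
      atTop (nhds 0) := by
    have h := Real.tendsto_pow_log_div_mul_add_atTop 1 0 (d * 5) one_ne_zero
    simp only [one_mul, add_zero] at h
    have h2 := (h.comp tendsto_natCast_atTop_atTop).const_mul K
    simp only [mul_zero] at h2
    convert h2 using 2 with k
    rw [Function.comp_apply, pow_mul]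
  exact squeeze_zero' (key.mono fun k h => h.1) (key.mono fun k h => h.2) hBnd
end
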